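/- Let A be a unital C*-algebra with unit e and let a, b, c ∈ A be such that a has a Moore-Penrose inverse a†, a = bc, b⁻¹(0) = 0, and cA = A; let b† and c† denote the Moore-Penrose inverses of b and c, let p = aa†, v = e − p + (a†)*a†, q = a†a, and w = e − q + a†(a†)*. Then: (i) b†(b†)* is invertible with inverse b*b; (ii) (c†)*c† is invertible with inverse cc*; (iii) vb = (b†)*(c†)*c† and cw = b†(b†)*(c†)*. -/

import Mathlib

noncomputable section

/-- `x` is a Moore–Penrose inverse of `a` in a C*-algebra: `axa = a`, `xax = x`, and
`ax`, `xa` are self-adjoint. -/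
def IsMPInvStar {A : Type*} [Ring A] [StarRing A] (a x : A) : Prop :=
  a * x * a = a ∧ x * a * x = x ∧ IsSelfAdjoint (a * x) ∧ IsSelfAdjoint (x * a)

/-!
Injectivity of `b` makes `b†` a left inverse of `b`, and surjectivity of `c` makes `c†` a
right inverse of `c`. Then `c†b†` satisfies the four Penrose equations for `bc`, so
`a† = c†b†`, and every identity reduces to `b†b = e = cc†` and the self-adjointness of `bb†`
and `c†c`. The claim about `c` is the claim about `b` for `c*`, whose Moore–Penrose inverse
is `(c†)*`.
-/

section Ring

variable {R : Type*} [Ring R] [StarRing R] {a b c x y : R}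

namespace IsMPInvStar

theorem unique (hx : IsMPInvStar a x) (hy : IsMPInvStar a y) : x = y := by
  obtain ⟨hx₁, hx₂, hx₃, hx₄⟩ := hx
  obtain ⟨hy₁, hy₂, hy₃, hy₄⟩ := hy
  have hax : a * x = a * y :=
    calc a * x = star (a * y * a * x) := by rw [hy₁, hx₃.star_eq]
      _ = (a * x * a) * y := by
        rw [mul_assoc (a * y), star_mul, hx₃.star_eq, hy₃.star_eq]; noncomm_ring
      _ = a * y := by rw [hx₁]
  have hxa : x * a = y * a :=
    calc x * a = star (x * (a * y * a)) := by rw [hy₁, hx₄.star_eq]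
      _ = star ((x * a) * (y * a)) := by noncomm_ring
      _ = y * (a * y) * a := by
        rw [star_mul, hx₄.star_eq, hy₄.star_eq, ← hax]; noncomm_ring
      _ = y * a := by rw [mul_assoc, hy₁]
  calc x = y * a * x := by rw [← hxa, hx₂]
    _ = y := by rw [mul_assoc, hax, ← mul_assoc, hy₂]

theorem inv_mul_cancel (h : IsMPInvStar b x) (hb : ∀ z, b * z = 0 → z = 0) : x * b = 1 :=
  sub_eq_zero.mp <| hb _ <| by rw [mul_sub, ← mul_assoc, h.1, mul_one, sub_self]

theorem mul_inv_cancel (h : IsMPInvStar c x) (hc : ∃ z, c * z = 1) : c * x = 1 := by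
  obtain ⟨z, hz⟩ := hc
  calc c * x = c * x * c * z := by rw [mul_assoc _ c, hz, mul_one]
    _ = 1 := by rw [h.1, hz]

theorem mul (hb : IsMPInvStar b x) (hc : IsMPInvStar c y) (hxb : x * b = 1) (hcy : c * y = 1) :
    IsMPInvStar (b * c) (y * x) := by
  have hleft : b * c * (y * x) = b * x := by rw [mul_assoc b, ← mul_assoc c, hcy, one_mul]
  have hright : y * x * (b * c) = y * c := by rw [mul_assoc y, ← mul_assoc x, hxb, one_mul]
  refine ⟨?_, ?_, hleft ▸ hb.2.2.1, hright ▸ hc.2.2.2⟩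
  · rw [hleft, mul_assoc, ← mul_assoc x, hxb, one_mul]
  · rw [hright, mul_assoc, ← mul_assoc c, hcy, one_mul]

theorem mul_star_self_mul_star_mul_self (h : IsMPInvStar b x) (hxb : x * b = 1) :
    x * star x * (star b * b) = 1 :=
  calc x * star x * (star b * b) = x * star (b * x) * b := by rw [star_mul]; noncomm_ring
    _ = (x * b) * (x * b) := by rw [h.2.2.1.star_eq]; noncomm_ring
    _ = 1 := by rw [hxb, mul_one]

theorem star_mul_self_mul_mul_star_self (h : IsMPInvStar b x) (hxb : x * b = 1) :
    star b * b * (x * star x) = 1 := by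
  simpa only [star_mul, star_star, mul_assoc, star_one] using
    congrArg star (h.mul_star_self_mul_star_mul_self hxb)

end IsMPInvStar

theorem IsMPInvStar.star (h : IsMPInvStar a x) : IsMPInvStar (star a) (star x) := by
  obtain ⟨h₁, h₂, h₃, h₄⟩ := h
  refine ⟨?_, ?_, ?_, ?_⟩
  · rw [← star_mul, ← star_mul, ← mul_assoc, h₁]
  · rw [← star_mul, ← star_mul, ← mul_assoc, h₂]
  · rw [← star_mul]; exact IsSelfAdjoint.star_iff.mpr h₄
  · rw [← star_mul]; exact IsSelfAdjoint.star_iff.mpr h₃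

end Ring

variable {A : Type*} [NormedRing A] [StarRing A] [CStarRing A] [CompleteSpace A]
  [NormedAlgebra ℂ A] [StarModule ℂ A]

/-- If `a = bc` with `b⁻¹(0) = 0`, `cA = A` and Moore–Penrose inverses `a†`, `b†`, `c†`,
with `v = e − aa† + (a†)*a†` and `w = e − a†a + a†(a†)*`: `b†(b†)*` is invertible with
inverse `b*b`, `(c†)*c†` is invertible with inverse `cc*`, and `vb = (b†)*(c†)*c†`,
`cw = b†(b†)*(c†)*`. -/
theorem mpInv_star_factorization_identities (a b c ad bd cd : A)
    (had : IsMPInvStar a ad) (hbd : IsMPInvStar b bd) (hcd : IsMPInvStar c cd)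
    (habc : a = b * c)
    (hb : {x : A | b * x = 0} = {0}) (hc : {y : A | ∃ x, y = c * x} = Set.univ) :
    (IsUnit (bd * star bd) ∧ bd * star bd * (star b * b) = 1 ∧
      (star b * b) * (bd * star bd) = 1) ∧
    (IsUnit (star cd * cd) ∧ star cd * cd * (c * star c) = 1 ∧
      (c * star c) * (star cd * cd) = 1) ∧
    (1 - a * ad + star ad * ad) * b = star bd * star cd * cd ∧
    c * (1 - ad * a + ad * star ad) = bd * star bd * star cd := by
  have hbdb : bd * b = 1 := hbd.inv_mul_cancel fun _ hz => hb.subset hz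
  obtain ⟨z, hz⟩ : (1 : A) ∈ {y : A | ∃ x, y = c * x} := hc ▸ Set.mem_univ 1
  have hccd : c * cd = 1 := hcd.mul_inv_cancel ⟨z, hz.symm⟩
  have hcdc : star cd * star c = 1 := by rw [← star_mul, hccd, star_one]
  have hb₁ := hbd.mul_star_self_mul_star_mul_self hbdb
  have hb₂ := hbd.star_mul_self_mul_mul_star_self hbdb
  have hc₁ := hcd.star.mul_star_self_mul_star_mul_self hcdc
  have hc₂ := hcd.star.star_mul_self_mul_mul_star_self hcdc
  rw [star_star, star_star] at hc₁ hc₂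
  obtain rfl : ad = cd * bd := had.unique (habc ▸ hbd.mul hcd hbdb hccd)
  subst habc
  refine ⟨⟨⟨⟨_, _, hb₁, hb₂⟩, rfl⟩, hb₁, hb₂⟩, ⟨⟨⟨_, _, hc₁, hc₂⟩, rfl⟩, hc₁, hc₂⟩,
    ?_, ?_⟩
  · calc (1 - b * c * (cd * bd) + star (cd * bd) * (cd * bd)) * b
        = b - b * (c * cd) * (bd * b) + star bd * star cd * cd * (bd * b) := by
          rw [star_mul]; noncomm_ring
      _ = star bd * star cd * cd := by rw [hccd, hbdb]; noncomm_ring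
  · calc c * (1 - cd * bd * (b * c) + cd * bd * star (cd * bd))
        = c - (c * cd) * (bd * b) * c + (c * cd) * (bd * star bd * star cd) := by
          rw [star_mul]; noncomm_ring
      _ = bd * star bd * star cd := by rw [hccd, hbdb]; noncomm_ring
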